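/- The sequence of Stirling numbers of the second kind j ↦ S(k,j) is logarithmically concave: for all 2 ≤ j ≤ k-1, S(k,j)^2 ≥ S(k,j-1) · S(k,j+1). -/
import Mathlib


/-- Stirling numbers of the second kind. -/
def stirling2 : ℕ → ℕ → ℕ
  | 0, 0 => 1
  | 0, _ + 1 => 0
  | _ + 1, 0 => 0
  | k + 1, j + 1 => stirling2 k j + (j + 1) * stirling2 k (j + 1)

lemma stirling2_eq_zero : ∀ k n : ℕ, k < n → stirling2 k n = 0 := by
  intro k
  induction k with
  | zero => intro n h; cases n with
    | zero => omega
    | succ m => rfl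
  | succ k ih =>
    intro n h
    cases n with
    | zero => omega
    | succ m =>
      show stirling2 k m + (m + 1) * stirling2 k (m + 1) = 0
      rw [ih m (by omega), ih (m+1) (by omega)]
      ring

lemma stirling2_pos : ∀ k n : ℕ, 1 ≤ n → n ≤ k → 0 < stirling2 k n := by
  intro k
  induction k with
  | zero => intro n h1 h2; omega
  | succ k ih =>
    intro n h1 h2
    cases n with
    | zero => omega
    | succ m =>
      show 0 < stirling2 k m + (m + 1) * stirling2 k (m + 1)
      cases m with
      | zero =>
        cases k with
        | zero => simp [stirling2]
        | succ k' =>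
          have := ih 1 (by omega) (by omega)
          positivity
      | succ m' =>
        have := ih (m' + 1) (by omega) (by omega)
        positivity

lemma stirling2_logconcave : ∀ k j : ℕ,
    stirling2 k j * stirling2 k (j + 2) ≤ stirling2 k (j + 1) ^ 2 := by
  intro k
  induction k with
  | zero =>
    intro j
    have : stirling2 0 (j + 2) = 0 := rfl
    simp [this]
  | succ k ih =>
    intro j
    cases j with
    | zero =>
      have : stirling2 (k + 1) 0 = 0 := rfl
      simp [this]
    | succ m =>
      have e1 : stirling2 (k+1) (m+1) = stirling2 k m + (m + 1) * stirling2 k (m+1) := rfl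
      have e2 : stirling2 (k+1) (m+2) = stirling2 k (m+1) + (m + 2) * stirling2 k (m+2) := rfl
      have e3 : stirling2 (k+1) (m+3) = stirling2 k (m+2) + (m + 3) * stirling2 k (m+3) := rfl
      set a := stirling2 k m
      set b := stirling2 k (m+1)
      set c := stirling2 k (m+2)
      set d := stirling2 k (m+3)
      have h1 : a * c ≤ b ^ 2 := ih m
      have h2 : b * d ≤ c ^ 2 := ih (m + 1)
      have h3 : a * d ≤ b * c := by
        by_cases hbc : 0 < b * c
        · have key : (a * d) * (b * c) ≤ (b * c) * (b * c) := by
            calc (a * d) * (b * c) = (a * c) * (b * d) := by ring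
              _ ≤ b ^ 2 * c ^ 2 := Nat.mul_le_mul h1 h2
              _ = (b * c) * (b * c) := by ring
          exact Nat.le_of_mul_le_mul_right key hbc
        · push_neg at hbc
          interval_cases h : b * c
          rcases Nat.mul_eq_zero.mp h with hb | hc
          · have hd : d = 0 := by
              have hkm : k < m + 1 := by
                by_contra hcon
                push_neg at hcon
                have := stirling2_pos k (m+1) (by omega) hcon
                omega
              exact stirling2_eq_zero k (m+3) (by omega)
            simp [hd]
          · have hd : d = 0 := by
              have hkm : k < m + 2 := by
                by_contra hcon
                push_neg at hcon
                have := stirling2_pos k (m+2) (by omega) hcon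
                omega
              exact stirling2_eq_zero k (m+3) (by omega)
            simp [hd]
      show stirling2 (k+1) (m+1) * stirling2 (k+1) (m+3) ≤ stirling2 (k+1) (m+2) ^ 2
      rw [e1, e2, e3]
      nlinarith [h1, h2, h3, Nat.mul_le_mul_left (m+3) h3,
        Nat.mul_le_mul_left ((m+1)*(m+3)) h2, Nat.mul_le_mul_left (m+1) h3]

/-- Log-concavity of the Stirling numbers of the second kind in j. -/
theorem stmt9 (k j : ℕ) (hk : 3 ≤ k) (hj2 : 2 ≤ j) (hjk : j ≤ k - 1) :
    stirling2 k (j - 1) * stirling2 k (j + 1) ≤ stirling2 k j ^ 2 := by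
  obtain ⟨m, rfl⟩ : ∃ m, j = m + 1 := ⟨j - 1, by omega⟩
  simpa using stirling2_logconcave k m
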